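/- Let S, T be n×n complex Hermitian matrices with 0 ≤ S ≤ 1 and 0 ≤ T ≤ 1, and set M := √S·√T + √(1−S)·√(1−T). Then tr(1 − M·M†) = η(S,T)² and 0 ≤ M·M† ≤ 1 (in particular det(M·M†) ≤ 1). -/

import Mathlib

open scoped Classical ComplexOrder Matrix

/-- The positive semidefinite square root of a positive semidefinite matrix
(junk value `0` if the matrix is not positive semidefinite). -/
noncomputable def msqrt {n : Type*} [Fintype n] [DecidableEq n]
    (A : Matrix n n ℂ) : Matrix n n ℂ :=
  if h : A.PosSemidef then
    (h.1.eigenvectorUnitary : Matrix n n ℂ) *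
      Matrix.diagonal ((↑) ∘ (Real.sqrt ·) ∘ h.1.eigenvalues) *
      (star h.1.eigenvectorUnitary : Matrix n n ℂ)
  else 0

/-- The Hilbert-Schmidt (Frobenius) norm of a matrix. -/
noncomputable def frob {n : Type*} [Fintype n]
    (M : Matrix n n ℂ) : ℝ :=
  Real.sqrt (∑ i, ∑ j, ‖M i j‖ ^ 2)

/-- `η(A,B) = ‖√(1−A)·√B − √A·√(1−B)‖₂`. -/
noncomputable def eta {n : Type*} [Fintype n] [DecidableEq n]
    (A B : Matrix n n ℂ) : ℝ :=
  frob (msqrt (1 - A) * msqrt B - msqrt A * msqrt (1 - B))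

/-- The eigenvector-form square root of a positive semidefinite matrix. -/
noncomputable def Matrix.PosSemidef.sqrt {m : Type*} [Fintype m] [DecidableEq m]
    {A : Matrix m m ℂ} (h : A.PosSemidef) : Matrix m m ℂ :=
  (h.1.eigenvectorUnitary : Matrix m m ℂ) *
    Matrix.diagonal ((↑) ∘ (Real.sqrt ·) ∘ h.1.eigenvalues) *
    (star h.1.eigenvectorUnitary : Matrix m m ℂ)

lemma sqrt_eq_cfc' {m : Type*} [Fintype m] [DecidableEq m] {A : Matrix m m ℂ}
    (hA : A.PosSemidef) : hA.sqrt = cfc Real.sqrt A := by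
  have hsa : IsSelfAdjoint A := hA.1.isSelfAdjoint
  have hsp : ∀ x ∈ spectrum ℝ A, 0 ≤ x := by
    rw [hA.1.spectrum_real_eq_range_eigenvalues]
    rintro x ⟨i, rfl⟩
    exact hA.eigenvalues_nonneg i
  have hcont : ContinuousOn Real.sqrt (spectrum ℝ A) := Real.continuous_sqrt.continuousOn
  have h1 : (cfc Real.sqrt A) ^ 2 = A := by
    rw [sq, ← cfc_mul _ _ A hcont hcont,
      cfc_congr (f := fun x => Real.sqrt x * Real.sqrt x) (g := fun x : ℝ => x)
        (fun x hx => Real.mul_self_sqrt (hsp x hx)), cfc_id' ℝ A]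
  have h2 : (cfc Real.sqrt A).PosSemidef := by
    set g : ℝ → ℝ := fun x => Real.sqrt (Real.sqrt x) with hg
    have hgc : ContinuousOn g (spectrum ℝ A) :=
      (Real.continuous_sqrt.comp Real.continuous_sqrt).continuousOn
    have hE : IsSelfAdjoint (cfc g A) := cfc_predicate g A
    have : cfc Real.sqrt A = (cfc g A)ᴴ * (cfc g A) := by
      rw [show (cfc g A)ᴴ = cfc g A from hE, ← cfc_mul _ _ A hgc hgc]
      exact cfc_congr fun x hx => (Real.mul_self_sqrt (Real.sqrt_nonneg x)).symm
    rw [this]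
    exact Matrix.posSemidef_conjTranspose_mul_self _
  rw [hA.1.cfc_eq, Matrix.IsHermitian.cfc, Unitary.conjStarAlgAut_apply]
  rfl

lemma Matrix.PosSemidef.posSemidef_sqrt {m : Type*} [Fintype m] [DecidableEq m]
    {A : Matrix m m ℂ} (hA : A.PosSemidef) : hA.sqrt.PosSemidef := by
  rw [sqrt_eq_cfc' hA]
  set g : ℝ → ℝ := fun x => Real.sqrt (Real.sqrt x) with hg
  have hgc : ContinuousOn g (spectrum ℝ A) :=
    (Real.continuous_sqrt.comp Real.continuous_sqrt).continuousOn
  have hE : IsSelfAdjoint (cfc g A) := cfc_predicate g A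
  have : cfc Real.sqrt A = (cfc g A)ᴴ * (cfc g A) := by
    rw [show (cfc g A)ᴴ = cfc g A from hE, ← cfc_mul _ _ A hgc hgc]
    exact cfc_congr fun x hx => (Real.mul_self_sqrt (Real.sqrt_nonneg x)).symm
  rw [this]
  exact Matrix.posSemidef_conjTranspose_mul_self _

lemma Matrix.PosSemidef.sqrt_mul_self {m : Type*} [Fintype m] [DecidableEq m]
    {A : Matrix m m ℂ} (hA : A.PosSemidef) : hA.sqrt * hA.sqrt = A := by
  have hsa : IsSelfAdjoint A := hA.1.isSelfAdjoint
  have hsp : ∀ x ∈ spectrum ℝ A, 0 ≤ x := by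
    rw [hA.1.spectrum_real_eq_range_eigenvalues]
    rintro x ⟨i, rfl⟩
    exact hA.eigenvalues_nonneg i
  have hcont : ContinuousOn Real.sqrt (spectrum ℝ A) := Real.continuous_sqrt.continuousOn
  rw [sqrt_eq_cfc' hA, ← cfc_mul _ _ A hcont hcont,
    cfc_congr (f := fun x => Real.sqrt x * Real.sqrt x) (g := fun x : ℝ => x)
      (fun x hx => Real.mul_self_sqrt (hsp x hx)), cfc_id' ℝ A]

lemma sqrt_commute' {m : Type*} [Fintype m] [DecidableEq m] {A : Matrix m m ℂ}
    (hA : A.PosSemidef) (hA1 : (1 - A).PosSemidef) :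
    hA.sqrt * hA1.sqrt = hA1.sqrt * hA.sqrt := by
  have hsa : IsSelfAdjoint A := hA.1.isSelfAdjoint
  have hone : (1 : Matrix m m ℂ) - A = cfc (fun x : ℝ => 1 - x) A := by
    rw [cfc_sub (fun _ : ℝ => (1:ℝ)) (fun x : ℝ => x) A continuousOn_const continuousOn_id,
      cfc_const_one ℝ A, cfc_id' ℝ A]
  have hcomp : cfc Real.sqrt (1 - A) = cfc (fun x : ℝ => Real.sqrt (1 - x)) A := by
    rw [hone, ← cfc_comp' Real.sqrt (fun x : ℝ => 1 - x) A
      (Real.continuous_sqrt.continuousOn) ((continuous_const.sub continuous_id).continuousOn)]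
  rw [sqrt_eq_cfc' hA, sqrt_eq_cfc' hA1, hcomp]
  exact cfc_commute_cfc _ _ _

lemma eigenvalue_le_one' {m : Type*} [Fintype m] [DecidableEq m] {X : Matrix m m ℂ}
    (hX : X.PosSemidef) (hX1 : (1 - X).PosSemidef) (i : m) :
    hX.1.eigenvalues i ≤ 1 := by
  set v : m → ℂ := ⇑(hX.1.eigenvectorBasis i) with hv
  have hvv : dotProduct (star v) v = 1 := by
    have := EuclideanSpace.inner_eq_star_dotProduct (hX.1.eigenvectorBasis i)
      (hX.1.eigenvectorBasis i)
    rw [inner_self_eq_norm_sq_to_K, hX.1.eigenvectorBasis.orthonormal.1 i] at this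
    rw [dotProduct_comm]
    simpa using this.symm
  have hmv : X *ᵥ v = hX.1.eigenvalues i • v := hX.1.mulVec_eigenvectorBasis i
  have h := hX1.dotProduct_mulVec_nonneg v
  rw [Matrix.sub_mulVec, Matrix.one_mulVec, dotProduct_sub, hmv,
    dotProduct_smul, hvv] at h
  have h' : ((hX.1.eigenvalues i : ℝ) : ℂ) ≤ 1 := by
    have := sub_nonneg.mp h
    simpa [Complex.real_smul] using this
  exact_mod_cast h'

theorem trace_one_sub_M_mul_Mdag {n : ℕ}
    (S T : Matrix (Fin n) (Fin n) ℂ)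
    (hS : S.PosSemidef) (hS1 : (1 - S).PosSemidef)
    (hT : T.PosSemidef) (hT1 : (1 - T).PosSemidef)
    (M : Matrix (Fin n) (Fin n) ℂ)
    (hM : M = msqrt S * msqrt T + msqrt (1 - S) * msqrt (1 - T)) :
    Matrix.trace (1 - M * Mᴴ) = ((eta S T ^ 2 : ℝ) : ℂ) ∧
      (M * Mᴴ).PosSemidef ∧ (1 - M * Mᴴ).PosSemidef ∧ (M * Mᴴ).det ≤ 1 := by
  have hmS : msqrt S = hS.sqrt := dif_pos hS
  have hmS1 : msqrt (1 - S) = hS1.sqrt := dif_pos hS1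
  have hmT : msqrt T = hT.sqrt := dif_pos hT
  have hmT1 : msqrt (1 - T) = hT1.sqrt := dif_pos hT1
  set p := hS.sqrt with hp
  set p' := hS1.sqrt with hp'
  set q := hT.sqrt with hq
  set q' := hT1.sqrt with hq'
  set N : Matrix (Fin n) (Fin n) ℂ := msqrt (1 - S) * msqrt T - msqrt S * msqrt (1 - T) with hNdef
  have hN : N = p' * q - p * q' := by rw [hNdef, hmS, hmS1, hmT, hmT1]
  have hM' : M = p * q + p' * q' := by rw [hM, hmS, hmS1, hmT, hmT1]
  have hpH : pᴴ = p := hS.posSemidef_sqrt.1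
  have hp'H : p'ᴴ = p' := hS1.posSemidef_sqrt.1
  have hqH : qᴴ = q := hT.posSemidef_sqrt.1
  have hq'H : q'ᴴ = q' := hT1.posSemidef_sqrt.1
  have hcomm : q * q' = q' * q := sqrt_commute' hT hT1
  have hMH : Mᴴ = q * p + q' * p' := by
    rw [hM']
    simp [Matrix.conjTranspose_add, Matrix.conjTranspose_mul, hpH, hp'H, hqH, hq'H]
  have hNH : Nᴴ = q * p' - q' * p := by
    rw [hN]
    simp [Matrix.conjTranspose_sub, Matrix.conjTranspose_mul, hpH, hp'H, hqH, hq'H]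
  have key : M * Mᴴ + N * Nᴴ = 1 := by
    have expand : M * Mᴴ + N * Nᴴ =
        p * (q * q + q' * q') * p + p' * (q * q + q' * q') * p' +
          ((p * (q * q') * p' - p * (q' * q) * p') +
            (p' * (q' * q) * p - p' * (q * q') * p)) := by
      rw [hMH, hNH, hM', hN]
      noncomm_ring
    rw [expand, hcomm, sub_self, sub_self, add_zero, add_zero,
      hT.sqrt_mul_self, hT1.sqrt_mul_self, add_sub_cancel, mul_one, mul_one,
      hS.sqrt_mul_self, hS1.sqrt_mul_self, add_sub_cancel]
  have hNN : N * Nᴴ = 1 - M * Mᴴ := eq_sub_of_add_eq' key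
  have hXpsd : (M * Mᴴ).PosSemidef := Matrix.posSemidef_self_mul_conjTranspose M
  have hX1psd : (1 - M * Mᴴ).PosSemidef := hNN ▸ Matrix.posSemidef_self_mul_conjTranspose N
  refine ⟨?_, hXpsd, hX1psd, ?_⟩
  · rw [← hNN]
    have h1 : Matrix.trace (N * Nᴴ) = ((∑ i, ∑ j, ‖N i j‖ ^ 2 : ℝ) : ℂ) := by
      simp only [Matrix.trace, Matrix.diag, Matrix.mul_apply, Matrix.conjTranspose_apply,
        Complex.star_def, Complex.mul_conj']
      push_cast
      ring
    have h2 : eta S T ^ 2 = ∑ i, ∑ j, ‖N i j‖ ^ 2 := by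
      rw [eta, ← hNdef, frob, Real.sq_sqrt]
      positivity
    rw [h1, h2]
  · have hH := hXpsd.1
    have hdet : (M * Mᴴ).det = ((∏ i, hH.eigenvalues i : ℝ) : ℂ) := by
      rw [hH.det_eq_prod_eigenvalues]
      push_cast
      rfl
    rw [hdet, show (1 : ℂ) = ((1 : ℝ) : ℂ) by norm_num, Complex.real_le_real]
    exact Finset.prod_le_one (fun i _ => hXpsd.eigenvalues_nonneg i)
      (fun i _ => eigenvalue_le_one' hXpsd hX1psd i)
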